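/- Let S be a surjective linear map from ℝⁿ onto ℝʳ and L : ℝᵐ → ℝⁿ a linear map with S L injective. Then there exists a linear map S̄ : ℝⁿ → ℝ^{n−r} such that the combined map x ↦ (S̄ x, S x) is a linear isomorphism ℝⁿ → ℝ^{n−r} × ℝʳ and S̄ L = 0. -/

import Mathlib

/-!
Since `S L` is injective, `range L` meets `ker S` trivially, so `ker S` has a complement `W`
containing `range L`. The projection onto `ker S` along `W`, followed by an isomorphism
`ker S ≃ ℝ^(n-r)` (rank–nullity), is `S̄`: it kills `range L`, and `(S̄, S)` is injective since
`ker S̄ ∩ ker S = W ∩ ker S = 0`, hence bijective by counting dimensions.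
-/

open Module LinearMap Function

theorem LinearMap.disjoint_range_ker_of_injective_comp {R M N P : Type*} [Ring R]
    [AddCommGroup M] [AddCommGroup N] [AddCommGroup P] [Module R M] [Module R N] [Module R P]
    {f : N →ₗ[R] P} {g : M →ₗ[R] N} (hfg : Injective (f ∘ₗ g)) :
    Disjoint (range g) (ker f) := by
  refine disjoint_ker.mpr ?_
  rintro _ ⟨y, rfl⟩ hy
  rw [show y = 0 from hfg (by simpa using hy), map_zero]

theorem Matrix.mulVecLin_fromRows {R m₁ m₂ n : Type*} [CommSemiring R] [Fintype n]
    (A : Matrix m₁ n R) (B : Matrix m₂ n R) :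
    (Matrix.fromRows A B).mulVecLin =
      (LinearEquiv.sumArrowLequivProdArrow m₁ m₂ R R).symm.toLinearMap ∘ₗ
        A.mulVecLin.prod B.mulVecLin := by
  ext v (i | i) <;> simp [Matrix.fromRows_mulVec]

section

variable {K U V W : Type*} [Field K] [AddCommGroup U] [AddCommGroup V] [AddCommGroup W]
  [Module K U] [Module K V] [Module K W]

theorem Submodule.exists_le_ker_disjoint_ker {N : Submodule K V} (f : V →ₗ[K] W)
    (hN : Disjoint N (ker f)) : ∃ p : V →ₗ[K] ker f, N ≤ ker p ∧ Disjoint (ker p) (ker f) := by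
  obtain ⟨C, hNC, hC⟩ := hN.exists_isCompl
  exact ⟨(ker f).projectionOnto C hC.symm, by rwa [Submodule.ker_projectionOnto],
    by simpa only [Submodule.ker_projectionOnto] using hC.disjoint⟩

theorem LinearMap.exists_comp_eq_zero_bijective_prod {E : Type*} [AddCommGroup E] [Module K E]
    [FiniteDimensional K V] [FiniteDimensional K E] {f : V →ₗ[K] W} {g : U →ₗ[K] V}
    (hf : Surjective f) (hfg : Injective (f ∘ₗ g))
    (hE : finrank K E + finrank K W = finrank K V) :
    ∃ p : V →ₗ[K] E, p ∘ₗ g = 0 ∧ Bijective (p.prod f) := by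
  have : FiniteDimensional K W := Module.Finite.of_surjective f hf
  obtain ⟨q, hgq, hq⟩ := Submodule.exists_le_ker_disjoint_ker f
    (disjoint_range_ker_of_injective_comp hfg)
  have hker : finrank K (ker f) = finrank K E := by
    have := finrank_range_add_finrank_ker f
    rw [range_eq_top.mpr hf, finrank_top] at this
    omega
  let e := LinearEquiv.ofFinrankEq _ _ hker
  let p := e.toLinearMap ∘ₗ q
  have hp : ker p = ker q := LinearEquiv.ker_comp _ _
  have hinj : Injective (p.prod f) := by
    rwa [← ker_eq_bot, ker_prod, hp, ← disjoint_iff]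
  refine ⟨p, ?_, hinj, ?_⟩
  · ext x : 1
    change e (q (g x)) = 0
    rw [mem_ker.mp (hgq (mem_range_self g x)), map_zero]
  · refine (injective_iff_surjective_of_finrank_eq_finrank ?_).mp hinj
    rw [finrank_prod, hE]

end

theorem exists_complementary_coordinates_general (n r m : ℕ)
    (hrn : r ≤ n)
    (S : Matrix (Fin r) (Fin n) ℝ) (L : Matrix (Fin n) (Fin m) ℝ)
    (hS : Function.Surjective S.mulVecLin)
    (hSL : Function.Injective (S * L).mulVecLin) :
    ∃ Sbar : Matrix (Fin (n - r)) (Fin n) ℝ,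
      Sbar * L = 0 ∧ Function.Bijective (Matrix.fromRows Sbar S).mulVecLin := by
  rw [Matrix.mulVecLin_mul] at hSL
  obtain ⟨p, hpL, hbij⟩ := exists_comp_eq_zero_bijective_prod (E := Fin (n - r) → ℝ) hS hSL
    (by simp only [finrank_fin_fun]; omega)
  refine ⟨LinearMap.toMatrix' p, ?_, ?_⟩
  · apply Matrix.toLin'.injective
    rw [Matrix.toLin'_mul, Matrix.toLin'_toMatrix', Matrix.toLin'_apply', hpL, map_zero]
  · rw [Matrix.mulVecLin_fromRows, ← Matrix.toLin'_apply', Matrix.toLin'_toMatrix',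
      coe_comp, LinearEquiv.coe_coe]
    exact (LinearEquiv.bijective _).comp hbij

theorem exists_complementary_coordinates (n r m : ℕ)
    (hmr : m ≤ r) (hrn : r ≤ n)
    (S : Matrix (Fin r) (Fin n) ℝ) (L : Matrix (Fin n) (Fin m) ℝ)
    (hS : Function.Surjective S.mulVecLin)
    (hSL : Function.Injective (S * L).mulVecLin) :
    ∃ Sbar : Matrix (Fin (n - r)) (Fin n) ℝ,
      Sbar * L = 0 ∧ Function.Bijective (Matrix.fromRows Sbar S).mulVecLin :=
  exists_complementary_coordinates_general n r m hrn S L hS hSL
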